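/- arXiv:2412.11110 — 2 statements merged into one kernel-verified Lean document; each statement's English description precedes it below -/
import Mathlib

section
/- Let σ = τ_x and let u = δ + βy + γz with δ, β, γ ∈ O_K and ν_D(u) = 1/2 (note σ(u) = u, so u is a symmetric element of value 1/2). Then ν_K(β² - aγ²) = 0 (i.e. β + γx is a unit of the ring of integers of the field K(x)) and there exists an invertible t ∈ D with u = σ(t)·(βy + γz)·t; that is, ⟨u⟩ ≅ ⟨βy + γz⟩ as hermitian forms over (D, τ_x). -/
noncomputable section

/-- A surjective discrete valuation `ν : K → ℤ` on a field `K`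
(the value of `ν` at `0` is irrelevant: only nonzero elements are constrained). -/
structure DVal (K : Type) [Field K] : Type where
  ν : K → ℤ
  ν_mul : ∀ x y : K, x ≠ 0 → y ≠ 0 → ν (x * y) = ν x + ν y
  ν_add : ∀ x y : K, x ≠ 0 → y ≠ 0 → x + y ≠ 0 → min (ν x) (ν y) ≤ ν (x + y)
  ν_one : ν 1 = 0
  ν_surj : ∀ n : ℤ, ∃ x : K, x ≠ 0 ∧ ν x = n

namespace DVal

variable {K : Type} [Field K]

/-- `x` belongs to the valuation ring `O_K`. -/
def Int (V : DVal K) (x : K) : Prop := x = 0 ∨ 0 ≤ V.ν x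

/-- `x` is a unit of the valuation ring `O_K`. -/
def IntUnit (V : DVal K) (x : K) : Prop := x ≠ 0 ∧ V.ν x = 0

/-- `x` belongs to the maximal ideal `m_K` of the valuation ring `O_K`. -/
def MaxIdeal (V : DVal K) (x : K) : Prop := x = 0 ∨ 1 ≤ V.ν x

/-- `K` is complete with respect to the valuation `ν`: every Cauchy sequence converges. -/
def IsComplete (V : DVal K) : Prop :=
  ∀ f : ℕ → K,
    (∀ M : ℤ, ∃ N : ℕ, ∀ m n : ℕ, N ≤ m → N ≤ n →
      f m - f n = 0 ∨ M ≤ V.ν (f m - f n)) →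
    ∃ L : K, ∀ M : ℤ, ∃ N : ℕ, ∀ n : ℕ, N ≤ n →
      f n - L = 0 ∨ M ≤ V.ν (f n - L)

/-- The residue field `k = O_K/m_K` has characteristic different from `2`,
i.e. `2` is a unit of the valuation ring `O_K`. -/
def ResCharNeTwo (V : DVal K) : Prop := (2 : K) ≠ 0 ∧ V.ν 2 = 0

end DVal

/-- The reduced norm of a quaternion `u = δ + αx + βy + γz ∈ ℍ[K,a,b]`:
`Nrd u = u·τ(u) = δ² - aα² - bβ² + abγ²`. -/
def qnrd {K : Type} [Field K] (a b : K) (u : QuaternionAlgebra K a 0 b) : K :=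
  u.re ^ 2 - a * u.imI ^ 2 - b * u.imJ ^ 2 + a * b * u.imK ^ 2

/-- The canonical involution `τ(δ + αx + βy + γz) = δ - αx - βy - γz` of `ℍ[K,a,b]`. -/
def qtau {K : Type} [Field K] {a b : K} (u : QuaternionAlgebra K a 0 b) :
    QuaternionAlgebra K a 0 b :=
  ⟨u.re, -u.imI, -u.imJ, -u.imK⟩

/-- The norm form `⟨1,-a,-b,ab⟩` of `ℍ[K,a,b]` is anisotropic over `K`
(equivalently, `ℍ[K,a,b]` is a division ring). -/
def QAniso {K : Type} [Field K] (a b : K) : Prop :=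
  ∀ d e f g : K, d ^ 2 - a * e ^ 2 - b * f ^ 2 + a * b * g ^ 2 = 0 →
    d = 0 ∧ e = 0 ∧ f = 0 ∧ g = 0

/-- The valuation `ν_D(u) = (1/2)·ν_K(Nrd u)` of the quaternion division algebra
`D = ℍ[K,a,b]` (at nonzero `u`). -/
def qnu {K : Type} [Field K] (V : DVal K) (a b : K) (u : QuaternionAlgebra K a 0 b) : ℚ :=
  (V.ν (qnrd a b u) : ℚ) / 2

/-
`Nrd(δ + βy + γz) = δ² - ϖ(β² - aγ²)`, and `β² - aγ²` is the norm of `β + γx` from `K(x) = K(√a)`.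
As `a` is a unit and not a square, Hensel's lemma shows that it is not a square modulo `m_K`
either, so `K(√a)/K` is unramified and its norms have even valuation. Hence `ν(Nrd u) = 1` forces
`ν(β² - aγ²) = 0` and `δ ∈ m_K`.

The element `w = βy + γz` satisfies `w² = N := ϖ(β² - aγ²)` and `τ_x` fixes `K(w)` pointwise, so
`σ(t) w t = t² w` for `t ∈ K(w)`. It therefore suffices to find a square root `t = p + qw` of
`1 + (δ/N) w` in `K(w)`, which Hensel's lemma provides because `δ²/N ∈ m_K`.
-/

def newtonSqrt {K : Type} [Field K] (c : K) : ℕ → K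
  | 0 => 1
  | n + 1 => (newtonSqrt c n + c / newtonSqrt c n) / 2

namespace DVal

variable {K : Type} [Field K] (V : DVal K)

lemma ν_neg_one : V.ν (-1) = 0 := by
  have h := V.ν_mul (-1) (-1) (by norm_num) (by norm_num)
  rw [neg_mul_neg, one_mul, V.ν_one] at h
  omega

lemma ν_neg {x : K} (hx : x ≠ 0) : V.ν (-x) = V.ν x := by
  have h := V.ν_mul (-1) x (by norm_num) hx
  rwa [neg_one_mul, ν_neg_one, zero_add] at h

lemma ν_pow_two {x : K} (hx : x ≠ 0) : V.ν (x ^ 2) = 2 * V.ν x := by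
  rw [sq, V.ν_mul x x hx hx]
  ring

lemma ν_div {x y : K} (hx : x ≠ 0) (hy : y ≠ 0) : V.ν (x / y) = V.ν x - V.ν y := by
  have h := V.ν_mul (x / y) y (div_ne_zero hx hy) hy
  rw [div_mul_cancel₀ x hy] at h
  omega

lemma add_ne_zero_and_ν_add_of_lt {x y : K} (hx : x ≠ 0) (hy : y ≠ 0) (h : V.ν x < V.ν y) :
    x + y ≠ 0 ∧ V.ν (x + y) = V.ν x := by
  have hxy : x + y ≠ 0 := by
    intro h0
    rw [eq_neg_of_add_eq_zero_right h0, V.ν_neg hx] at h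
    exact lt_irrefl _ h
  refine ⟨hxy, le_antisymm ?_ (by simpa [min_eq_left h.le] using V.ν_add x y hx hy hxy)⟩
  have := V.ν_add (x + y) (-y) hxy (neg_ne_zero.2 hy) (by rwa [add_neg_cancel_right])
  rw [add_neg_cancel_right, V.ν_neg hy] at this
  omega

lemma add_ne_zero_and_ν_add_of_ne {x y : K} (hx : x ≠ 0) (hy : y ≠ 0) (h : V.ν x ≠ V.ν y) :
    x + y ≠ 0 ∧ V.ν (x + y) = min (V.ν x) (V.ν y) := by
  rcases h.lt_or_gt with h | h
  · rw [min_eq_left h.le]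
    exact V.add_ne_zero_and_ν_add_of_lt hx hy h
  · rw [min_eq_right h.le, add_comm]
    exact V.add_ne_zero_and_ν_add_of_lt hy hx h

lemma sub_ne_zero_and_ν_sub_of_ne {x y : K} (hx : x ≠ 0) (hy : y ≠ 0) (h : V.ν x ≠ V.ν y) :
    x - y ≠ 0 ∧ V.ν (x - y) = min (V.ν x) (V.ν y) := by
  rw [sub_eq_add_neg, ← V.ν_neg hy]
  exact V.add_ne_zero_and_ν_add_of_ne hx (neg_ne_zero.2 hy) (by rwa [V.ν_neg hy])

def ValGe (M : ℤ) (x : K) : Prop := x = 0 ∨ M ≤ V.ν x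

namespace ValGe

variable {V} {M M' : ℤ} {x y : K}

lemma mono (hx : V.ValGe M x) (h : M' ≤ M) : V.ValGe M' x :=
  hx.imp id h.trans

lemma neg (hx : V.ValGe M x) : V.ValGe M (-x) := by
  rcases eq_or_ne x 0 with rfl | h0
  · exact Or.inl neg_zero
  · exact Or.inr (V.ν_neg h0 ▸ hx.resolve_left h0)

lemma add (hx : V.ValGe M x) (hy : V.ValGe M y) : V.ValGe M (x + y) := by
  rcases eq_or_ne x 0 with rfl | hx0
  · rwa [zero_add]
  rcases eq_or_ne y 0 with rfl | hy0
  · rwa [add_zero]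
  rcases eq_or_ne (x + y) 0 with h | h
  · exact Or.inl h
  have := V.ν_add x y hx0 hy0 h
  have := hx.resolve_left hx0
  have := hy.resolve_left hy0
  exact Or.inr (by omega)

lemma mul (hx : V.ValGe M x) (hy : V.ValGe M' y) : V.ValGe (M + M') (x * y) := by
  rcases eq_or_ne x 0 with rfl | hx0
  · exact Or.inl (zero_mul y)
  rcases eq_or_ne y 0 with rfl | hy0
  · exact Or.inl (mul_zero x)
  rw [ValGe, V.ν_mul x y hx0 hy0]
  exact Or.inr (add_le_add (hx.resolve_left hx0) (hy.resolve_left hy0))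

lemma div (hx : V.ValGe M x) (hy : y ≠ 0) : V.ValGe (M - V.ν y) (x / y) := by
  rcases eq_or_ne x 0 with rfl | hx0
  · exact Or.inl (zero_div y)
  rw [ValGe, V.ν_div hx0 hy]
  exact Or.inr (by linarith [hx.resolve_left hx0])

end ValGe

lemma eq_zero_of_forall_valGe {x : K} (h : ∀ n : ℕ, V.ValGe n x) : x = 0 := by
  by_contra hx
  have := (h (V.ν x + 1).toNat).resolve_left hx
  omega

lemma intUnit_of_valGe_sub_one {x : K} (h : V.ValGe 1 (x - 1)) : V.IntUnit x := by
  rcases eq_or_ne (x - 1) 0 with h0 | h0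
  · rw [sub_eq_zero.1 h0]
    exact ⟨one_ne_zero, V.ν_one⟩
  have hlt : V.ν 1 < V.ν (x - 1) := by
    rw [V.ν_one]
    exact Int.one_pos.trans_le (h.resolve_left h0)
  simpa [IntUnit, V.ν_one] using V.add_ne_zero_and_ν_add_of_lt one_ne_zero h0 hlt

lemma valGe_newton_step (hchar : V.ResCharNeTwo) {M : ℤ} (hM : 1 ≤ M) {c g : K}
    (hg : V.ValGe 1 (g - 1)) (h : V.ValGe M (g ^ 2 - c)) :
    V.ValGe M ((g + c / g) / 2 - g) ∧ V.ValGe (M + 1) (((g + c / g) / 2) ^ 2 - c) := by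
  obtain ⟨hg0, hνg⟩ := V.intUnit_of_valGe_sub_one hg
  have h2 : (2 : K) ≠ 0 := hchar.1
  have h2g : 2 * g ≠ 0 := mul_ne_zero h2 hg0
  have hε : V.ValGe M ((g ^ 2 - c) / (2 * g)) := by
    have := h.div h2g
    rwa [V.ν_mul 2 g h2 hg0, hchar.2, hνg, add_zero, sub_zero] at this
  have hstep : (g + c / g) / 2 - g = -((g ^ 2 - c) / (2 * g)) := by
    field_simp
    ring
  have hsq : ((g + c / g) / 2) ^ 2 - c = ((g ^ 2 - c) / (2 * g)) * ((g ^ 2 - c) / (2 * g)) := by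
    field_simp
    ring
  rw [hstep, hsq]
  exact ⟨hε.neg, (hε.mul hε).mono (by omega)⟩

lemma valGe_newtonSqrt (hchar : V.ResCharNeTwo) {c : K} (hc : V.ValGe 1 (c - 1)) (n : ℕ) :
    V.ValGe 1 (newtonSqrt c n - 1) ∧ V.ValGe (n + 1) (newtonSqrt c n ^ 2 - c) := by
  induction n with
  | zero =>
    refine ⟨Or.inl (sub_self 1), ?_⟩
    simpa [newtonSqrt, neg_sub] using hc.neg
  | succ n ih =>
    obtain ⟨hstep, hsq⟩ := V.valGe_newton_step hchar (by omega) ih.1 ih.2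
    refine ⟨?_, hsq.mono (by push_cast; omega)⟩
    simpa only [newtonSqrt, sub_add_sub_cancel] using (hstep.mono (by omega)).add ih.1

lemma valGe_newtonSqrt_succ_sub (hchar : V.ResCharNeTwo) {c : K} (hc : V.ValGe 1 (c - 1))
    (n : ℕ) : V.ValGe (n + 1) (newtonSqrt c (n + 1) - newtonSqrt c n) :=
  (V.valGe_newton_step hchar (by omega) (V.valGe_newtonSqrt hchar hc n).1
    (V.valGe_newtonSqrt hchar hc n).2).1

lemma exists_limit_of_valGe_succ_sub (hcomp : V.IsComplete) {f : ℕ → K}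
    (hf : ∀ n : ℕ, V.ValGe (n + 1) (f (n + 1) - f n)) :
    ∃ L, ∀ n : ℕ, V.ValGe (n + 1) (f n - L) := by
  have hcauchy : ∀ m n : ℕ, m ≤ n → V.ValGe (m + 1) (f n - f m) := by
    intro m n hmn
    induction n, hmn using Nat.le_induction with
    | base => exact Or.inl (sub_self _)
    | succ n hmn ih =>
      rw [← sub_add_sub_cancel]
      exact ((hf n).mono (by omega)).add ih
  obtain ⟨L, hL⟩ := hcomp f fun M => ⟨M.toNat, fun m n hm hn => by
    rcases le_total m n with h | h
    · exact (neg_sub (f n) (f m) ▸ (hcauchy m n h).neg).mono (by omega)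
    · exact (hcauchy n m h).mono (by omega)⟩
  refine ⟨L, fun n => ?_⟩
  obtain ⟨N, hN⟩ := hL (n + 1)
  have := (hcauchy n (max N n) (le_max_right _ _)).neg.add (hN (max N n) (le_max_left N n))
  rwa [neg_sub, sub_add_sub_cancel] at this

theorem exists_sq_eq_of_valGe_sub_one (hcomp : V.IsComplete) (hchar : V.ResCharNeTwo) {c : K}
    (hc : V.ValGe 1 (c - 1)) : ∃ r, r ^ 2 = c ∧ V.ValGe 1 (r - 1) := by
  obtain ⟨L, hL⟩ := V.exists_limit_of_valGe_succ_sub hcomp (V.valGe_newtonSqrt_succ_sub hchar hc)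
  have hL1 : V.ValGe 1 (L - 1) := by simpa [newtonSqrt] using (hL 0).neg
  refine ⟨L, sub_eq_zero.1 (V.eq_zero_of_forall_valGe fun n => ?_), hL1⟩
  obtain ⟨hg1, hgc⟩ := V.valGe_newtonSqrt hchar hc n
  have hsum : V.ValGe 0 (L + newtonSqrt c n) := by
    have h2 : V.ValGe 0 (2 : K) := Or.inr hchar.2.ge
    convert h2.add ((hL1.add hg1).mono zero_le_one) using 1
    ring
  have e : L ^ 2 - c = -(newtonSqrt c n - L) * (L + newtonSqrt c n) + (newtonSqrt c n ^ 2 - c) := by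
    ring
  rw [e]
  exact (((hL n).neg.mul hsum).add (hgc.mono (by omega))).mono (by omega)

section NonSquareUnit

variable (hcomp : V.IsComplete) (hchar : V.ResCharNeTwo) {a : K} (ha : V.IntUnit a)
  (hsq : ¬IsSquare a)
include hcomp hchar ha hsq

lemma ν_sq_sub_eq_zero {s : K} (hs : V.IntUnit s) : V.ν (s ^ 2 - a) = 0 := by
  have hs2 : V.ν (s ^ 2) = 0 := by rw [V.ν_pow_two hs.1, hs.2, mul_zero]
  have hne : s ^ 2 - a ≠ 0 := fun h => hsq ⟨s, by linear_combination -h⟩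
  have hge : 0 ≤ V.ν (s ^ 2 - a) := by
    have := V.ν_add (s ^ 2) (-a) (pow_ne_zero 2 hs.1) (neg_ne_zero.2 ha.1)
      (by rwa [← sub_eq_add_neg])
    rwa [← sub_eq_add_neg, V.ν_neg ha.1, hs2, ha.2, min_self] at this
  by_contra h0
  -- otherwise `a / s²` is a square by Hensel's lemma, hence so is `a`
  have hc : V.ValGe 1 (a / s ^ 2 - 1) := by
    have := (show V.ValGe 1 (s ^ 2 - a) from Or.inr (by omega)).neg.div (pow_ne_zero 2 hs.1)
    rw [hs2, sub_zero] at this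
    convert this using 1
    field_simp [hs.1]
    ring
  obtain ⟨r, hr, -⟩ := V.exists_sq_eq_of_valGe_sub_one hcomp hchar hc
  refine hsq ⟨r * s, ?_⟩
  rw [eq_div_iff (pow_ne_zero 2 hs.1)] at hr
  linear_combination -hr

lemma even_ν_sq_sub (s : K) : Even (V.ν (s ^ 2 - a)) := by
  rcases eq_or_ne s 0 with rfl | hs0
  · rw [zero_pow two_ne_zero, zero_sub, V.ν_neg ha.1, ha.2]
    exact Even.zero
  rcases eq_or_ne (V.ν s) 0 with hs | hs
  · rw [V.ν_sq_sub_eq_zero hcomp hchar ha hsq ⟨hs0, hs⟩]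
    exact Even.zero
  rw [(V.sub_ne_zero_and_ν_sub_of_ne (pow_ne_zero 2 hs0) ha.1
    (by rw [V.ν_pow_two hs0, ha.2]; omega)).2, V.ν_pow_two hs0, ha.2]
  rcases le_total (2 * V.ν s) 0 with h | h
  · rw [min_eq_left h]
    exact even_two_mul _
  · rw [min_eq_right h]
    exact Even.zero

lemma sq_sub_mul_sq_ne_zero_and_even {β γ : K} (hβγ : ¬(β = 0 ∧ γ = 0)) :
    β ^ 2 - a * γ ^ 2 ≠ 0 ∧ Even (V.ν (β ^ 2 - a * γ ^ 2)) := by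
  rcases eq_or_ne γ 0 with rfl | hγ
  · have hβ : β ≠ 0 := fun h => hβγ ⟨h, rfl⟩
    rw [zero_pow two_ne_zero, mul_zero, sub_zero, V.ν_pow_two hβ]
    exact ⟨pow_ne_zero 2 hβ, even_two_mul _⟩
  have hs : (β / γ) ^ 2 - a ≠ 0 := fun h => hsq ⟨β / γ, by linear_combination -h⟩
  have e : β ^ 2 - a * γ ^ 2 = γ ^ 2 * ((β / γ) ^ 2 - a) := by
    field_simp
  rw [e, V.ν_mul _ _ (pow_ne_zero 2 hγ) hs, V.ν_pow_two hγ]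
  exact ⟨mul_ne_zero (pow_ne_zero 2 hγ) hs,
    (even_two_mul _).add (V.even_ν_sq_sub hcomp hchar ha hsq _)⟩

end NonSquareUnit

lemma ν_eq_zero_and_valGe_of_ν_sq_sub_mul_eq_one {ϖ E δ : K} (hϖ0 : ϖ ≠ 0) (hνϖ : V.ν ϖ = 1)
    (hE0 : E ≠ 0) (hE : Even (V.ν E)) (h : V.ν (δ ^ 2 - ϖ * E) = 1) :
    V.ν E = 0 ∧ V.ValGe 1 δ := by
  have hϖE : V.ν (ϖ * E) = 1 + V.ν E := by rw [V.ν_mul _ _ hϖ0 hE0, hνϖ]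
  obtain ⟨m, hm⟩ := hE
  rcases eq_or_ne δ 0 with rfl | hδ
  · rw [zero_pow two_ne_zero, zero_sub, V.ν_neg (mul_ne_zero hϖ0 hE0), hϖE] at h
    exact ⟨by omega, Or.inl rfl⟩
  -- the two terms have valuations of different parity
  rw [(V.sub_ne_zero_and_ν_sub_of_ne (pow_ne_zero 2 hδ) (mul_ne_zero hϖ0 hE0)
    (by rw [V.ν_pow_two hδ, hϖE]; omega)).2, V.ν_pow_two hδ, hϖE] at h
  exact ⟨by omega, Or.inr (by omega)⟩

lemma exists_sq_add_mul_sq_eq_one (hcomp : V.IsComplete) (hchar : V.ResCharNeTwo) {N δ : K}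
    (hN : N ≠ 0) (hδ : V.ValGe 1 (δ ^ 2 / N)) :
    ∃ p q : K, p ^ 2 + N * q ^ 2 = 1 ∧ 2 * p * q * N = δ ∧ p ^ 2 - N * q ^ 2 ≠ 0 := by
  have h2 : (2 : K) ≠ 0 := hchar.1
  -- `p + q√N` is a square root of `1 + (δ / N)√N`; its norm `r = p² - Nq²` is `√(1 - δ²/N)`
  obtain ⟨r, hr, hr1⟩ := V.exists_sq_eq_of_valGe_sub_one hcomp hchar (c := 1 - δ ^ 2 / N)
    (by simpa using hδ.neg)
  have hs : V.ValGe 1 ((1 + r) / 2 - 1) := by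
    have := hr1.div h2
    rw [hchar.2, sub_zero] at this
    convert this using 1
    field_simp
    ring
  obtain ⟨p, hp, hp1⟩ := V.exists_sq_eq_of_valGe_sub_one hcomp hchar hs
  have hp0 : p ≠ 0 := (V.intUnit_of_valGe_sub_one hp1).1
  have hr0 : r ≠ 0 := (V.intUnit_of_valGe_sub_one hr1).1
  have hp' : 2 * p ^ 2 = 1 + r := by rw [hp]; field_simp
  have hr' : N * r ^ 2 = N - δ ^ 2 := by rw [hr]; field_simp
  have hnorm : p ^ 2 - N * (δ / (2 * N * p)) ^ 2 = r := by
    field_simp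
    linear_combination (N * (2 * p ^ 2 + 1 + r) - 2 * N * r) * hp' - hr'
  refine ⟨p, δ / (2 * N * p), ?_, by field_simp, hnorm ▸ hr0⟩
  field_simp
  linear_combination (N * (2 * p ^ 2 + 1 + r) - 2 * N) * hp' + hr'

end DVal

section Quaternion

variable {K : Type} [Field K] {c₁ c₃ : K}

lemma qnrd_mk_zero (δ β γ : K) :
    qnrd c₁ c₃ (⟨δ, 0, β, γ⟩ : QuaternionAlgebra K c₁ 0 c₃) = δ ^ 2 - c₃ * (β ^ 2 - c₁ * γ ^ 2) := by
  unfold qnrd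
  ring

lemma mul_qtau_self (u : QuaternionAlgebra K c₁ 0 c₃) : u * qtau u = ↑(qnrd c₁ c₃ u) := by
  ext <;> simp only [qtau, qnrd, QuaternionAlgebra.re_mul, QuaternionAlgebra.imI_mul,
    QuaternionAlgebra.imJ_mul, QuaternionAlgebra.imK_mul, QuaternionAlgebra.re_coe,
    QuaternionAlgebra.imI_coe, QuaternionAlgebra.imJ_coe, QuaternionAlgebra.imK_coe] <;> ring

lemma qtau_mul_self (u : QuaternionAlgebra K c₁ 0 c₃) : qtau u * u = ↑(qnrd c₁ c₃ u) := by
  ext <;> simp only [qtau, qnrd, QuaternionAlgebra.re_mul, QuaternionAlgebra.imI_mul,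
    QuaternionAlgebra.imJ_mul, QuaternionAlgebra.imK_mul, QuaternionAlgebra.re_coe,
    QuaternionAlgebra.imI_coe, QuaternionAlgebra.imJ_coe, QuaternionAlgebra.imK_coe] <;> ring

lemma isUnit_of_qnrd_ne_zero {u : QuaternionAlgebra K c₁ 0 c₃} (h : qnrd c₁ c₃ u ≠ 0) :
    IsUnit u := by
  refine ⟨⟨u, ↑(qnrd c₁ c₃ u)⁻¹ * qtau u, ?_, ?_⟩, rfl⟩
  · rw [← mul_assoc, ← QuaternionAlgebra.comm, mul_assoc, mul_qtau_self,
      ← QuaternionAlgebra.coe_mul, inv_mul_cancel₀ h, QuaternionAlgebra.coe_one]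
  · rw [mul_assoc, qtau_mul_self, ← QuaternionAlgebra.coe_mul, inv_mul_cancel₀ h,
      QuaternionAlgebra.coe_one]

lemma x_mul_qtau_eq_mul_x {u : QuaternionAlgebra K c₁ 0 c₃} (hu : u.imI = 0) :
    ⟨0, 1, 0, 0⟩ * qtau u = u * ⟨0, 1, 0, 0⟩ := by
  ext <;> simp [qtau, hu]

lemma x_mul_qtau_mul_eq_self {u μ : QuaternionAlgebra K c₁ 0 c₃} (hu : u.imI = 0)
    (hμ : ⟨0, 1, 0, 0⟩ * μ = 1) : ⟨0, 1, 0, 0⟩ * qtau u * μ = u := by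
  rw [x_mul_qtau_eq_mul_x hu, mul_assoc, hμ, mul_one]

lemma mk_mul_mk_mul_mk (p q β γ : K) :
    (⟨p, 0, q * β, q * γ⟩ : QuaternionAlgebra K c₁ 0 c₃) * ⟨0, 0, β, γ⟩ * ⟨p, 0, q * β, q * γ⟩ =
      ⟨2 * p * q * (c₃ * (β ^ 2 - c₁ * γ ^ 2)), 0,
        (p ^ 2 + c₃ * (β ^ 2 - c₁ * γ ^ 2) * q ^ 2) * β,
        (p ^ 2 + c₃ * (β ^ 2 - c₁ * γ ^ 2) * q ^ 2) * γ⟩ := by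
  ext <;> simp <;> ring

end Quaternion

theorem stmt_9_general (K : Type) [Field K] (V : DVal K)
    -- K is complete with residue field of characteristic ≠ 2
    (hcomp : V.IsComplete) (hchar : V.ResCharNeTwo)
    -- D = ℍ[K,a,ϖ] with a ∈ O_K^×, ϖ a uniformizer, D a division ring
    (a ϖ : K) (ha0 : a ≠ 0) (hva : V.ν a = 0) (hϖ0 : ϖ ≠ 0) (hvϖ : V.ν ϖ = 1)
    (haniso : QAniso a ϖ)
    -- σ = τ_x (μ = λ⁻¹)
    (mu : QuaternionAlgebra K a 0 ϖ)
    (hmu : (⟨0, 1, 0, 0⟩ : QuaternionAlgebra K a 0 ϖ) * mu = 1)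
    (σ : QuaternionAlgebra K a 0 ϖ → QuaternionAlgebra K a 0 ϖ)
    (hσ : ∀ u, σ u = (⟨0, 1, 0, 0⟩ : QuaternionAlgebra K a 0 ϖ) * qtau u * mu)
    -- u = δ + βy + γz with coordinates in O_K and ν_D(u) = 1/2
    (δ β γ : K)
    (hu0 : (⟨δ, 0, β, γ⟩ : QuaternionAlgebra K a 0 ϖ) ≠ 0)
    (hval : qnu V a ϖ (⟨δ, 0, β, γ⟩ : QuaternionAlgebra K a 0 ϖ) = 1 / 2) :
    V.IntUnit (β ^ 2 - a * γ ^ 2) ∧ ∃ t : QuaternionAlgebra K a 0 ϖ, IsUnit t ∧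
      (⟨δ, 0, β, γ⟩ : QuaternionAlgebra K a 0 ϖ) =
        σ t * (⟨0, 0, β, γ⟩ : QuaternionAlgebra K a 0 ϖ) * t := by
  have hνu : V.ν (δ ^ 2 - ϖ * (β ^ 2 - a * γ ^ 2)) = 1 := by
    rw [qnu, qnrd_mk_zero] at hval
    exact_mod_cast (by linarith : (V.ν (δ ^ 2 - ϖ * (β ^ 2 - a * γ ^ 2)) : ℚ) = 1)
  have hβγ : ¬(β = 0 ∧ γ = 0) := by
    rintro ⟨rfl, rfl⟩
    have hδ : δ ≠ 0 := by
      rintro rfl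
      exact hu0 rfl
    simp only [zero_pow two_ne_zero, mul_zero, sub_zero, V.ν_pow_two hδ] at hνu
    omega
  have hsq : ¬IsSquare a := fun ⟨r, hr⟩ => one_ne_zero (haniso r 1 0 0 (by rw [hr]; ring)).2.1
  obtain ⟨hE0, hEeven⟩ := V.sq_sub_mul_sq_ne_zero_and_even hcomp hchar ⟨ha0, hva⟩ hsq hβγ
  obtain ⟨hνE, hδ⟩ := V.ν_eq_zero_and_valGe_of_ν_sq_sub_mul_eq_one hϖ0 hvϖ hE0 hEeven hνu
  have hN0 := mul_ne_zero hϖ0 hE0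
  have hδN : V.ValGe 1 (δ ^ 2 / (ϖ * (β ^ 2 - a * γ ^ 2))) := by
    have := (hδ.mul hδ).div hN0
    rw [V.ν_mul _ _ hϖ0 hE0, hvϖ, hνE, ← sq] at this
    exact this.mono (by omega)
  obtain ⟨p, q, hpq, hpqδ, hnorm⟩ := V.exists_sq_add_mul_sq_eq_one hcomp hchar hN0 hδN
  refine ⟨⟨hE0, hνE⟩, ⟨p, 0, q * β, q * γ⟩, isUnit_of_qnrd_ne_zero ?_, ?_⟩
  · rw [qnrd_mk_zero]
    convert hnorm using 1
    ring
  · rw [hσ, x_mul_qtau_mul_eq_self rfl hmu, mk_mul_mk_mul_mk, hpq, hpqδ, one_mul, one_mul]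

/-- if `u = δ + βy + γz` is symmetric of value `1/2` for `σ = τ_x` then `β + γx`
is a unit of the ring of integers of `K(x)` (i.e. `ν_K(β² - aγ²) = 0`) and
`⟨u⟩ ≅ ⟨βy + γz⟩` over `(D, τ_x)`. -/
theorem stmt_9 (K : Type) [Field K] (V : DVal K)
    -- K is complete with residue field of characteristic ≠ 2
    (hcomp : V.IsComplete) (hchar : V.ResCharNeTwo)
    -- D = ℍ[K,a,ϖ] with a ∈ O_K^×, ϖ a uniformizer, D a division ring
    (a ϖ : K) (ha0 : a ≠ 0) (hva : V.ν a = 0) (hϖ0 : ϖ ≠ 0) (hvϖ : V.ν ϖ = 1)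
    (haniso : QAniso a ϖ)
    -- σ = τ_x (μ = λ⁻¹)
    (mu : QuaternionAlgebra K a 0 ϖ)
    (hmu : (⟨0, 1, 0, 0⟩ : QuaternionAlgebra K a 0 ϖ) * mu = 1) (hmu' : mu * (⟨0, 1, 0, 0⟩ : QuaternionAlgebra K a 0 ϖ) = 1)
    (σ : QuaternionAlgebra K a 0 ϖ → QuaternionAlgebra K a 0 ϖ)
    (hσ : ∀ u, σ u = (⟨0, 1, 0, 0⟩ : QuaternionAlgebra K a 0 ϖ) * qtau u * mu)
    -- u = δ + βy + γz with coordinates in O_K and ν_D(u) = 1/2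
    (δ β γ : K) (hδ : V.Int δ) (hβ : V.Int β) (hγ : V.Int γ)
    (hu0 : (⟨δ, 0, β, γ⟩ : QuaternionAlgebra K a 0 ϖ) ≠ 0)
    (hval : qnu V a ϖ (⟨δ, 0, β, γ⟩ : QuaternionAlgebra K a 0 ϖ) = 1 / 2) :
    V.IntUnit (β ^ 2 - a * γ ^ 2) ∧ ∃ t : QuaternionAlgebra K a 0 ϖ, IsUnit t ∧
      (⟨δ, 0, β, γ⟩ : QuaternionAlgebra K a 0 ϖ) =
        σ t * (⟨0, 0, β, γ⟩ : QuaternionAlgebra K a 0 ϖ) * t :=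
  stmt_9_general K V hcomp hchar a ϖ ha0 hva hϖ0 hvϖ haniso mu hmu σ hσ δ β γ hu0 hval
end
end

section
/- Let σ = τ_y and let u = δ + αx + γz with δ, α, γ ∈ O_K and ν_D(u) = 1/2 (note σ(u) = u, so u is a symmetric element of value 1/2). Then γ ∈ O_K^× and there exists an invertible t ∈ D with u = σ(t)·(γz)·t; that is, ⟨u⟩ ≅ ⟨γz⟩ as hermitian forms over (D, τ_y). -/
/-
Since `a` is a unit that is not a square in `K`, Hensel's lemma shows that it is not a square
modulo `ϖ` either, so `ν(δ² - aα²) = 2·min(ν δ, ν α)` is even, whereas `ν(aϖγ²) = 1 + 2·ν γ` is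
odd. Hence `ν(Nrd u) = 1` forces `ν γ = 0` and `δ, α ∈ ϖO_K`. Writing `α = 2ϖγP` and
`δ = -2aϖγQ` with `P, Q ∈ O_K`, the element `t = d + (P y + Q z) / d` satisfies `τ_y(t)·γz·t = u`
as soon as `d⁴ - d² = ϖ(aQ² - P²)`, and such a `d ≡ 1` exists by Hensel's lemma, applied first
to `e² - e = ϖ(aQ² - P²)` and then to `d² = e`.
-/

noncomputable section

theorem WithTop.eq_top_of_two_nsmul_eq_one_add_two_nsmul {m g : WithTop ℤ}
    (h : 2 • m = 1 + 2 • g) : m = ⊤ := by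
  induction m <;> induction g <;> simp [two_nsmul] at h ⊢
  norm_cast at h
  omega

theorem WithTop.eq_zero_and_one_le_of_min_two_nsmul_eq_one {m g : WithTop ℤ}
    (h : min (2 • m) (1 + 2 • g) = 1) : g = 0 ∧ 1 ≤ m := by
  induction m <;> induction g <;> simp [two_nsmul] at h ⊢ <;> norm_cast at h ⊢ <;> omega

namespace DVal

variable {K : Type} [Field K] (V : DVal K)

open Classical in
/-- `ν` with the junk value at `0` replaced by `⊤`. -/
def val : AddValuation K (WithTop ℤ) :=
  AddValuation.of (fun x => if x = 0 then ⊤ else (V.ν x : WithTop ℤ)) (if_pos rfl)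
    (by simp [V.ν_one])
    (by
      intro x y
      by_cases hx : x = 0; · simp [hx]
      by_cases hy : y = 0; · simp [hy]
      by_cases hxy : x + y = 0; · simp [hxy]
      simpa [hx, hy, hxy] using V.ν_add x y hx hy hxy)
    (by
      intro x y
      by_cases hx : x = 0; · simp [hx]
      by_cases hy : y = 0; · simp [hy]
      simp [hx, hy, V.ν_mul x y hx hy])

variable {V}

theorem val_of_ne_zero {x : K} (hx : x ≠ 0) : V.val x = V.ν x := by
  simp [val, hx]

theorem coe_le_val_iff {x : K} {M : ℤ} : (M : WithTop ℤ) ≤ V.val x ↔ x = 0 ∨ M ≤ V.ν x := by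
  by_cases hx : x = 0
  · simp [hx]
  · simp [val_of_ne_zero hx, hx]

theorem val_eq_zero_iff {x : K} : V.val x = 0 ↔ V.IntUnit x := by
  by_cases hx : x = 0
  · simp [hx, IntUnit]
  · simp [val_of_ne_zero hx, IntUnit, hx]

theorem ResCharNeTwo.val_two (hchar : V.ResCharNeTwo) : V.val 2 = 0 :=
  val_eq_zero_iff.2 hchar

theorem eq_zero_of_forall_le_val {x : K} (h : ∀ n : ℕ, (n : WithTop ℤ) ≤ V.val x) : x = 0 := by
  by_contra hx
  have := h (V.ν x + 1).toNat
  rw [val_of_ne_zero hx] at this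
  have : (((V.ν x + 1).toNat : ℕ) : ℤ) ≤ V.ν x := by exact_mod_cast this
  omega

theorem le_val_sub_of_le {f : ℕ → K} (hf : ∀ n : ℕ, (n : WithTop ℤ) ≤ V.val (f (n + 1) - f n))
    {n m : ℕ} (hnm : n ≤ m) : (n : WithTop ℤ) ≤ V.val (f m - f n) := by
  induction m, hnm using Nat.le_induction with
  | base => simp
  | succ m hnm ih =>
    rw [← sub_add_sub_cancel]
    exact V.val.map_le_add (le_trans (by exact_mod_cast hnm) (hf m)) ih

theorem IsComplete.exists_limit (hcomp : V.IsComplete) {f : ℕ → K}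
    (hf : ∀ n : ℕ, (n : WithTop ℤ) ≤ V.val (f (n + 1) - f n)) :
    ∃ L, ∀ n : ℕ, (n : WithTop ℤ) ≤ V.val (f n - L) := by
  have hdist : ∀ {N m n : ℕ}, N ≤ m → N ≤ n → (N : WithTop ℤ) ≤ V.val (f m - f n) := by
    intro N m n hm hn
    rcases le_total m n with h | h
    · rw [V.val.map_sub_swap]
      exact le_trans (by exact_mod_cast hm) (le_val_sub_of_le hf h)
    · exact le_trans (by exact_mod_cast hn) (le_val_sub_of_le hf h)
  obtain ⟨L, hL⟩ := hcomp f fun M => ⟨M.toNat, fun m n hm hn =>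
    coe_le_val_iff.1 <| le_trans (by exact_mod_cast Int.self_le_toNat M) (hdist hm hn)⟩
  refine ⟨L, fun n => ?_⟩
  obtain ⟨N, hN⟩ := hL n
  rw [← sub_add_sub_cancel _ (f (max N n))]
  exact V.val.map_le_add (hdist le_rfl (le_max_right N n))
    (coe_le_val_iff.2 (hN _ (le_max_left _ _)))

theorem val_newton_step (hchar : V.ResCharNeTwo) {c s : K} (hs : 1 ≤ V.val (s - 1))
    (hq : 1 ≤ V.val (s ^ 2 - c)) :
    1 ≤ V.val (s - (s ^ 2 - c) / 2 - 1) ∧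
      V.val (s ^ 2 - c) + 1 ≤ V.val ((s - (s ^ 2 - c) / 2) ^ 2 - c) := by
  have h2 : (2 : K) ≠ 0 := hchar.1
  have hq2 : 1 ≤ V.val ((s ^ 2 - c) / 2) := by rwa [V.val.map_div, hchar.val_two, sub_zero]
  refine ⟨sub_right_comm s _ 1 ▸ V.val.map_le_sub hs hq2, ?_⟩
  have hfac : (s - (s ^ 2 - c) / 2) ^ 2 - c = (s ^ 2 - c) * ((s ^ 2 - c) / 2 / 2 - (s - 1)) := by
    field_simp
    ring
  rw [hfac, V.val.map_mul]
  refine add_le_add le_rfl (V.val.map_le_sub ?_ hs)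
  rwa [V.val.map_div, hchar.val_two, sub_zero]

/-- Hensel's lemma for `X ^ 2 - c`, by the iteration `s ↦ s - (s ^ 2 - c) / 2`. -/
theorem exists_sq_eq (hcomp : V.IsComplete) (hchar : V.ResCharNeTwo) {c : K}
    (hc : 1 ≤ V.val (c - 1)) : ∃ s, s ^ 2 = c ∧ 1 ≤ V.val (s - 1) := by
  have hv2 := hchar.val_two
  let s : ℕ → K := fun n => Nat.rec 1 (fun _ s => s - (s ^ 2 - c) / 2) n
  have hs : ∀ n, s (n + 1) = s n - (s n ^ 2 - c) / 2 := fun _ => rfl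
  have key : ∀ n, 1 ≤ V.val (s n - 1) ∧ ((n + 1 : ℕ) : WithTop ℤ) ≤ V.val (s n ^ 2 - c) := by
    intro n
    induction n with
    | zero => simpa [s, V.val.map_sub_swap 1 c] using hc
    | succ n ih =>
      obtain ⟨h1, hq⟩ := ih
      obtain ⟨h1', hq'⟩ := val_newton_step hchar h1 (le_trans (by exact_mod_cast n.succ_pos) hq)
      rw [hs, Nat.cast_succ]
      exact ⟨h1', (add_le_add_left hq 1).trans hq'⟩
  have hstep : ∀ n : ℕ, (n : WithTop ℤ) ≤ V.val (s (n + 1) - s n) := by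
    intro n
    rw [hs, sub_sub_cancel_left, V.val.map_neg, V.val.map_div, hv2, sub_zero]
    exact le_trans (by exact_mod_cast n.le_succ) (key n).2
  obtain ⟨L, hL⟩ := hcomp.exists_limit hstep
  refine ⟨L, sub_eq_zero.1 (eq_zero_of_forall_le_val (V := V) fun n => ?_), ?_⟩
  · have hsn : 0 ≤ V.val (s n) := by
      rw [← sub_add_cancel (s n) 1]
      exact V.val.map_le_add (le_trans zero_le_one (key n).1) (by simp)
    have hLs : (n : WithTop ℤ) ≤ V.val (L - s n) := V.val.map_sub_swap (s n) L ▸ hL n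
    have hsum : 0 ≤ V.val (L + s n) := by
      rw [show L + s n = (L - s n) + 2 * s n by ring]
      refine V.val.map_le_add (le_trans (by exact_mod_cast n.zero_le) hLs) ?_
      rwa [V.val.map_mul, hv2, zero_add]
    rw [show L ^ 2 - c = (L - s n) * (L + s n) + (s n ^ 2 - c) by ring]
    refine V.val.map_le_add ?_ (le_trans (by exact_mod_cast n.le_succ) (key n).2)
    rw [V.val.map_mul, ← add_zero (n : WithTop ℤ)]
    exact add_le_add hLs hsum
  · rw [← sub_add_sub_cancel L (s 1)]
    exact V.val.map_le_add (V.val.map_sub_swap (s 1) L ▸ by exact_mod_cast hL 1) (key 1).1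

/-- A unit that is not a square stays a non-square modulo the maximal ideal (by Hensel). -/
theorem val_sq_sub_eq_zero (hcomp : V.IsComplete) (hchar : V.ResCharNeTwo) {a : K}
    (ha : ∀ r : K, r ^ 2 ≠ a) (hva : V.val a = 0) {s : K} (hs : V.val (s ^ 2) = 0) :
    V.val (s ^ 2 - a) = 0 := by
  have hs0 : s ≠ 0 := by rintro rfl; simp at hs
  have hsa : s ^ 2 - a ≠ 0 := sub_ne_zero.2 (ha s)
  refine le_antisymm ?_ (V.val.map_le_sub hs.ge hva.ge)
  by_contra! hlt
  obtain ⟨r, hr, -⟩ := exists_sq_eq hcomp hchar (c := a / s ^ 2) <| by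
    rw [show a / s ^ 2 - 1 = -((s ^ 2 - a) / s ^ 2) by field_simp; ring, V.val.map_neg,
      V.val.map_div, hs, sub_zero]
    rw [val_of_ne_zero hsa] at hlt ⊢
    exact_mod_cast (show (0 : ℤ) < V.ν (s ^ 2 - a) by exact_mod_cast hlt)
  exact ha (r * s) (by rw [mul_pow, hr]; field_simp)

theorem val_sq_sub_mul_sq (hcomp : V.IsComplete) (hchar : V.ResCharNeTwo) {a : K}
    (ha : ∀ r : K, r ^ 2 ≠ a) (hva : V.val a = 0) (δ α : K) :
    V.val (δ ^ 2 - a * α ^ 2) = 2 • min (V.val δ) (V.val α) := by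
  rw [Monotone.map_min (f := fun x : WithTop ℤ => 2 • x) fun x y h => nsmul_le_nsmul_right h 2,
    ← V.val.map_pow, ← V.val.map_pow, ← zero_add (V.val (α ^ 2)), ← hva, ← V.val.map_mul]
  by_cases hne : V.val (δ ^ 2) = V.val (a * α ^ 2)
  · rcases eq_or_ne α 0 with rfl | hα
    · simp
    have hα2 : V.val (α ^ 2) ≠ ⊤ := V.val.ne_top_iff.2 (pow_ne_zero 2 hα)
    have hs : V.val ((δ / α) ^ 2) = 0 := by
      rw [div_pow, V.val.map_div, LinearOrderedAddCommGroupWithTop.sub_eq_zero hα2, hne,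
        V.val.map_mul, hva, zero_add]
    rw [show δ ^ 2 - a * α ^ 2 = α ^ 2 * ((δ / α) ^ 2 - a) by field_simp, V.val.map_mul,
      val_sq_sub_eq_zero hcomp hchar ha hva hs, add_zero, ← hne, min_self, hne, V.val.map_mul, hva,
      zero_add]
  · rw [sub_eq_add_neg, V.val.map_add_of_distinct_val (by rwa [V.val.map_neg]), V.val.map_neg]

theorem val_div_nonneg {x y : K} (hx : 1 ≤ V.val x) (hy : V.val y = 1) : 0 ≤ V.val (x / y) := by
  rw [V.val.map_div, hy]
  generalize V.val x = w at hx ⊢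
  induction w with
  | top => simp
  | coe n => norm_cast at hx ⊢; omega

theorem exists_sq_sub_self_eq (hcomp : V.IsComplete) (hchar : V.ResCharNeTwo) {b : K}
    (hb : 1 ≤ V.val b) : ∃ e, e ^ 2 - e = b ∧ 1 ≤ V.val (e - 1) := by
  have h2 : (2 : K) ≠ 0 := hchar.1
  obtain ⟨s, hs, hs1⟩ := exists_sq_eq hcomp hchar (c := 1 + 4 * b) <| by
    rw [add_sub_cancel_left, V.val.map_mul, show (4 : K) = 2 * 2 by norm_num, V.val.map_mul,
      hchar.val_two, zero_add, zero_add]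
    exact hb
  refine ⟨(1 + s) / 2, by field_simp; linear_combination hs, ?_⟩
  rw [show (1 + s) / 2 - 1 = (s - 1) / 2 by field_simp; ring, V.val.map_div, hchar.val_two,
    sub_zero]
  exact hs1

theorem exists_pow_four_sub_sq_eq (hcomp : V.IsComplete) (hchar : V.ResCharNeTwo) {b : K}
    (hb : 1 ≤ V.val b) : ∃ d ≠ 0, d ^ 4 - d ^ 2 = b := by
  obtain ⟨e, he, he1⟩ := exists_sq_sub_self_eq hcomp hchar hb
  obtain ⟨d, rfl, hd1⟩ := exists_sq_eq hcomp hchar he1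
  refine ⟨d, ?_, by rw [← he]; ring⟩
  rintro rfl
  norm_num at hd1
  norm_cast at hd1

/-- Since `ν(δ² - aα²)` is even and `ν(abγ²)` is odd, there is no cancellation in their sum. -/
theorem val_eq_zero_and_one_le_of_val_sq_sub_mul_sq_add_eq_one (hcomp : V.IsComplete)
    (hchar : V.ResCharNeTwo) {a b : K} (ha : ∀ r : K, r ^ 2 ≠ a) (hva : V.val a = 0)
    (hvb : V.val b = 1) {δ α γ : K} (h : V.val (δ ^ 2 - a * α ^ 2 + a * b * γ ^ 2) = 1) :
    V.val γ = 0 ∧ 1 ≤ V.val δ ∧ 1 ≤ V.val α := by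
  have hx := val_sq_sub_mul_sq hcomp hchar ha hva δ α
  have hy : V.val (a * b * γ ^ 2) = 1 + 2 • V.val γ := by
    rw [V.val.map_mul, V.val.map_mul, hva, hvb, V.val.map_pow, zero_add]
  have hxy : V.val (δ ^ 2 - a * α ^ 2 + a * b * γ ^ 2) =
      min (V.val (δ ^ 2 - a * α ^ 2)) (V.val (a * b * γ ^ 2)) := by
    by_cases hne : V.val (δ ^ 2 - a * α ^ 2) = V.val (a * b * γ ^ 2)
    · have hm := WithTop.eq_top_of_two_nsmul_eq_one_add_two_nsmul
        (m := min (V.val δ) (V.val α)) (g := V.val γ) (by rw [← hx, ← hy]; exact hne)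
      have hx0 : δ ^ 2 - a * α ^ 2 = 0 := V.val.top_iff.1 (by rw [hx, hm]; rfl)
      have hy0 : a * b * γ ^ 2 = 0 := V.val.top_iff.1 (by rw [← hne, hx0, V.val.map_zero])
      exact absurd h (by simp [hx0, hy0])
    · exact V.val.map_add_of_distinct_val hne
  rw [hxy, hx, hy] at h
  obtain ⟨hγ, hm⟩ := WithTop.eq_zero_and_one_le_of_min_two_nsmul_eq_one h
  exact ⟨hγ, hm.trans (min_le_left _ _), hm.trans (min_le_right _ _)⟩

theorem exists_pow_four_sub_sq_eq_mul_sub (hcomp : V.IsComplete) (hchar : V.ResCharNeTwo)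
    {a b P Q : K} (hva : V.val a = 0) (hvb : V.val b = 1) (hP : 0 ≤ V.val P) (hQ : 0 ≤ V.val Q) :
    ∃ d ≠ 0, d ^ 4 - d ^ 2 = b * (a * Q ^ 2 - P ^ 2) := by
  refine exists_pow_four_sub_sq_eq hcomp hchar ?_
  rw [V.val.map_mul, hvb, ← add_zero (1 : WithTop ℤ)]
  refine add_le_add le_rfl (V.val.map_le_sub ?_ ?_) <;>
    simp only [V.val.map_mul, V.val.map_pow, hva, zero_add] <;> exact nsmul_nonneg ‹_› 2

end DVal

section Quaternion

variable {K : Type} [Field K] {a b : K}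

theorem qtau_eq_star (u : QuaternionAlgebra K a 0 b) : qtau u = star u := by
  ext <;> simp [qtau]

theorem mul_qtau (u : QuaternionAlgebra K a 0 b) :
    u * qtau u = (↑(qnrd a b u) : QuaternionAlgebra K a 0 b) := by
  rw [qtau_eq_star, QuaternionAlgebra.mul_star_eq_coe]
  congr 1
  simp [qnrd]
  ring

theorem qtau_mul (u : QuaternionAlgebra K a 0 b) :
    qtau u * u = (↑(qnrd a b u) : QuaternionAlgebra K a 0 b) := by
  rw [qtau_eq_star, QuaternionAlgebra.star_mul_eq_coe]
  congr 1
  simp [qnrd]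
  ring

theorem QAniso.sq_ne (h : QAniso a b) (r : K) : r ^ 2 ≠ a := fun hr =>
  one_ne_zero (h r 1 0 0 (by rw [hr]; ring)).2.1

theorem QAniso.qnrd_ne_zero (h : QAniso a b) {u : QuaternionAlgebra K a 0 b} (hu : u ≠ 0) :
    qnrd a b u ≠ 0 := fun h0 => by
  obtain ⟨h1, h2, h3, h4⟩ := h _ _ _ _ h0
  exact hu (QuaternionAlgebra.ext h1 h2 h3 h4)

theorem QAniso.isUnit (h : QAniso a b) {u : QuaternionAlgebra K a 0 b} (hu : u ≠ 0) : IsUnit u := by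
  have hN := h.qnrd_ne_zero hu
  refine ⟨⟨u, (qnrd a b u)⁻¹ • qtau u, ?_, ?_⟩, rfl⟩
  · rw [mul_smul_comm, mul_qtau, ← QuaternionAlgebra.coe_mul_eq_smul, ← QuaternionAlgebra.coe_mul,
      inv_mul_cancel₀ hN, QuaternionAlgebra.coe_one]
  · rw [smul_mul_assoc, qtau_mul, ← QuaternionAlgebra.coe_mul_eq_smul, ← QuaternionAlgebra.coe_mul,
      inv_mul_cancel₀ hN, QuaternionAlgebra.coe_one]

theorem QAniso.val_qnrd_eq_one {V : DVal K} (h : QAniso a b) {u : QuaternionAlgebra K a 0 b}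
    (hu : u ≠ 0) (hval : qnu V a b u = 1 / 2) : V.val (qnrd a b u) = 1 := by
  rw [DVal.val_of_ne_zero (h.qnrd_ne_zero hu)]
  unfold qnu at hval
  exact_mod_cast (by linarith : (V.ν (qnrd a b u) : ℚ) = 1)

theorem j_mul_j_inv (hb : b ≠ 0) :
    (⟨0, 0, 1, 0⟩ : QuaternionAlgebra K a 0 b) * ⟨0, 0, b⁻¹, 0⟩ = 1 := by
  ext <;> simp [hb]

/-- With `y = ⟨0, 0, 1, 0⟩` and `z = ⟨0, 0, 0, 1⟩`, the left side is `τ_y(t) · γz · t` for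
`t = d + (P y + Q z) / d`. -/
theorem j_mul_qtau_mul_j_inv_mul_mul (hb : b ≠ 0) {d P Q : K} (hd : d ≠ 0)
    (h : d ^ 4 - d ^ 2 = b * (a * Q ^ 2 - P ^ 2)) (γ : K) :
    (⟨0, 0, 1, 0⟩ : QuaternionAlgebra K a 0 b) * qtau ⟨d, 0, P / d, Q / d⟩ * ⟨0, 0, b⁻¹, 0⟩ *
        ⟨0, 0, 0, γ⟩ * ⟨d, 0, P / d, Q / d⟩ = ⟨-2 * a * b * γ * Q, 2 * b * γ * P, 0, γ⟩ := by
  ext <;> simp [qtau] <;> field_simp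
  · ring
  · ring
  · ring
  · linear_combination γ * h

end Quaternion

theorem stmt_10_general (K : Type) [Field K] (V : DVal K)
    -- K is complete with residue field of characteristic ≠ 2
    (hcomp : V.IsComplete) (hchar : V.ResCharNeTwo)
    -- D = ℍ[K,a,ϖ] with a ∈ O_K^×, ϖ a uniformizer, D a division ring
    (a ϖ : K) (ha0 : a ≠ 0) (hva : V.ν a = 0) (hϖ0 : ϖ ≠ 0) (hvϖ : V.ν ϖ = 1)
    (haniso : QAniso a ϖ)
    -- σ = τ_y (μ = λ⁻¹)
    (mu : QuaternionAlgebra K a 0 ϖ)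
    (hmu' : mu * (⟨0, 0, 1, 0⟩ : QuaternionAlgebra K a 0 ϖ) = 1)
    (σ : QuaternionAlgebra K a 0 ϖ → QuaternionAlgebra K a 0 ϖ)
    (hσ : ∀ u, σ u = (⟨0, 0, 1, 0⟩ : QuaternionAlgebra K a 0 ϖ) * qtau u * mu)
    -- u = δ + αx + γz with coordinates in O_K and ν_D(u) = 1/2
    (δ α γ : K)
    (hu0 : (⟨δ, α, 0, γ⟩ : QuaternionAlgebra K a 0 ϖ) ≠ 0)
    (hval : qnu V a ϖ (⟨δ, α, 0, γ⟩ : QuaternionAlgebra K a 0 ϖ) = 1 / 2) :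
    V.IntUnit γ ∧ ∃ t : QuaternionAlgebra K a 0 ϖ, IsUnit t ∧
      (⟨δ, α, 0, γ⟩ : QuaternionAlgebra K a 0 ϖ) =
        σ t * (⟨0, 0, 0, γ⟩ : QuaternionAlgebra K a 0 ϖ) * t := by
  have hva' : V.val a = 0 := DVal.val_eq_zero_iff.2 ⟨ha0, hva⟩
  have hvϖ' : V.val ϖ = 1 := by rw [DVal.val_of_ne_zero hϖ0, hvϖ]; rfl
  have hnorm : V.val (δ ^ 2 - a * α ^ 2 + a * ϖ * γ ^ 2) = 1 := by
    simpa [qnrd] using haniso.val_qnrd_eq_one hu0 hval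
  obtain ⟨hγ, hδ, hα⟩ := DVal.val_eq_zero_and_one_le_of_val_sq_sub_mul_sq_add_eq_one hcomp hchar
    haniso.sq_ne hva' hvϖ' hnorm
  have hγ0 : γ ≠ 0 := by rintro rfl; simp at hγ
  have hv2ϖγ : V.val (2 * ϖ * γ) = 1 := by
    rw [V.val.map_mul, V.val.map_mul, hchar.val_two, hvϖ', hγ]; rfl
  have hv2aϖγ : V.val (2 * a * ϖ * γ) = 1 := by
    rw [V.val.map_mul, V.val.map_mul, V.val.map_mul, hchar.val_two, hva', hvϖ', hγ]; rfl
  set P := α / (2 * ϖ * γ)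
  set Q := -δ / (2 * a * ϖ * γ)
  obtain ⟨d, hd, hdeq⟩ := DVal.exists_pow_four_sub_sq_eq_mul_sub hcomp hchar hva' hvϖ'
    (DVal.val_div_nonneg hα hv2ϖγ) (DVal.val_div_nonneg (V.val.map_neg δ ▸ hδ) hv2aϖγ)
  refine ⟨DVal.val_eq_zero_iff.1 hγ, ⟨d, 0, P / d, Q / d⟩,
    haniso.isUnit fun h => hd (congrArg QuaternionAlgebra.re h), ?_⟩
  rw [hσ, left_inv_eq_right_inv hmu' (j_mul_j_inv hϖ0), j_mul_qtau_mul_j_inv_mul_mul hϖ0 hd hdeq]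
  have h2 : (2 : K) ≠ 0 := hchar.1
  ext <;> field_simp

/-- if `u = δ + αx + γz` is symmetric of value `1/2` for `σ = τ_y` then
`γ ∈ O_K^×` and `⟨u⟩ ≅ ⟨γz⟩` over `(D, τ_y)`. -/
theorem stmt_10 (K : Type) [Field K] (V : DVal K)
    -- K is complete with residue field of characteristic ≠ 2
    (hcomp : V.IsComplete) (hchar : V.ResCharNeTwo)
    -- D = ℍ[K,a,ϖ] with a ∈ O_K^×, ϖ a uniformizer, D a division ring
    (a ϖ : K) (ha0 : a ≠ 0) (hva : V.ν a = 0) (hϖ0 : ϖ ≠ 0) (hvϖ : V.ν ϖ = 1)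
    (haniso : QAniso a ϖ)
    -- σ = τ_y (μ = λ⁻¹)
    (mu : QuaternionAlgebra K a 0 ϖ)
    (hmu : (⟨0, 0, 1, 0⟩ : QuaternionAlgebra K a 0 ϖ) * mu = 1) (hmu' : mu * (⟨0, 0, 1, 0⟩ : QuaternionAlgebra K a 0 ϖ) = 1)
    (σ : QuaternionAlgebra K a 0 ϖ → QuaternionAlgebra K a 0 ϖ)
    (hσ : ∀ u, σ u = (⟨0, 0, 1, 0⟩ : QuaternionAlgebra K a 0 ϖ) * qtau u * mu)
    -- u = δ + αx + γz with coordinates in O_K and ν_D(u) = 1/2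
    (δ α γ : K) (hδ : V.Int δ) (hα : V.Int α) (hγ : V.Int γ)
    (hu0 : (⟨δ, α, 0, γ⟩ : QuaternionAlgebra K a 0 ϖ) ≠ 0)
    (hval : qnu V a ϖ (⟨δ, α, 0, γ⟩ : QuaternionAlgebra K a 0 ϖ) = 1 / 2) :
    V.IntUnit γ ∧ ∃ t : QuaternionAlgebra K a 0 ϖ, IsUnit t ∧
      (⟨δ, α, 0, γ⟩ : QuaternionAlgebra K a 0 ϖ) =
        σ t * (⟨0, 0, 0, γ⟩ : QuaternionAlgebra K a 0 ϖ) * t :=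
  stmt_10_general K V hcomp hchar a ϖ ha0 hva hϖ0 hvϖ haniso mu hmu' σ hσ δ α γ hu0 hval
end
end
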